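/- arXiv:2101.04357 — 6 statements merged into one kernel-verified Lean document; each statement's English description precedes it below -/
import Mathlib

section
/- Let 𝔻 be a data domain, n and k natural numbers, and for each i : Fin k let Ω i be a measurable space and A i a mechanism assigning to each database D : Fin n → 𝔻 a probability measure A i D on Ω i. Let ε : Fin k → ℝ with ε i ≥ 0, and suppose each A i is (ε i)-indistinguishable at distance one: for all databases D, D' with hammingDist D D' = 1 and every measurable S ⊆ Ω i, A i D S ≤ exp(ε i) · A i D' S. Then the (independent) composed mechanism D ↦ Measure.pi (fun i => A i D) on the product space Π i, Ω i satisfies, for all D, D' with hammingDist D D' = 1 and every measurable S ⊆ Π i, Ω i: Measure.pi (fun i => A i D) S ≤ exp(∑ i, ε i) · Measure.pi (fun i => A i D') S. -/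
open MeasureTheory

open scoped ENNReal

/-- Monotonicity of the product measure. -/
theorem pi_mono_aux {k : ℕ} {Ω : Fin k → Type*} [∀ i, MeasurableSpace (Ω i)]
    (μ ν : ∀ i, Measure (Ω i)) (h : ∀ i, μ i ≤ ν i) :
    Measure.pi μ ≤ Measure.pi ν := by
  have hout : (OuterMeasure.pi fun i => (μ i).toOuterMeasure) ≤
      OuterMeasure.pi fun i => (ν i).toOuterMeasure := by
    simp only [OuterMeasure.pi]
    rw [OuterMeasure.le_boundedBy]
    intro s
    refine le_trans (OuterMeasure.boundedBy_le s) ?_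
    exact Finset.prod_le_prod' fun i _ => (h i) _
  refine Measure.le_iff.mpr fun S hS => ?_
  rw [Measure.pi, Measure.pi, toMeasure_apply _ _ hS, toMeasure_apply _ _ hS]
  exact hout S

/-- Product measure of scaled measures. -/
theorem pi_smul_aux {k : ℕ} {Ω : Fin k → Type*} [∀ i, MeasurableSpace (Ω i)]
    (ν : ∀ i, Measure (Ω i)) [∀ i, IsFiniteMeasure (ν i)] (c : Fin k → ℝ≥0∞)
    (hc : ∀ i, c i ≠ ⊤) :
    Measure.pi (fun i => c i • ν i) = (∏ i, c i) • Measure.pi ν := by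
  haveI : ∀ i, IsFiniteMeasure (c i • ν i) := fun i =>
    ⟨by
      simp only [Measure.smul_apply, smul_eq_mul]
      exact ENNReal.mul_lt_top (hc i).lt_top (measure_lt_top _ _)⟩
  refine Measure.pi_eq fun s hs => ?_
  simp only [Measure.smul_apply, smul_eq_mul, Measure.pi_pi, Finset.prod_mul_distrib]

/-- Composition of differential privacy: the independent composition of mechanisms that are
respectively `ε i`-indistinguishable at distance one is `∑ i, ε i`-indistinguishable at
distance one. -/
theorem stmt2 {𝔻 : Type*} [DecidableEq 𝔻] {n k : ℕ}
    {Ω : Fin k → Type*} [∀ i, MeasurableSpace (Ω i)]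
    (A : ∀ i : Fin k, (Fin n → 𝔻) → Measure (Ω i))
    (hA : ∀ i D, IsProbabilityMeasure (A i D))
    (ε : Fin k → ℝ) (hε : ∀ i, 0 ≤ ε i)
    (h1 : ∀ i, ∀ D D' : Fin n → 𝔻, hammingDist D D' = 1 →
      ∀ S : Set (Ω i), MeasurableSet S →
        ((A i D) S).toReal ≤ Real.exp (ε i) * ((A i D') S).toReal) :
    ∀ D D' : Fin n → 𝔻, hammingDist D D' = 1 →
      ∀ S : Set (∀ i, Ω i), MeasurableSet S →
        (Measure.pi (fun i => A i D) S).toReal ≤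
          Real.exp (∑ i, ε i) * (Measure.pi (fun i => A i D') S).toReal := by
  intro D D' hDD' S hS
  haveI : ∀ i, IsProbabilityMeasure (A i D) := fun i => hA i D
  haveI : ∀ i, IsProbabilityMeasure (A i D') := fun i => hA i D'
  set c : Fin k → ℝ≥0∞ := fun i => ENNReal.ofReal (Real.exp (ε i)) with hcdef
  have hc : ∀ i, c i ≠ ⊤ := fun i => ENNReal.ofReal_ne_top
  -- pointwise measure inequality
  have hle : ∀ i, A i D ≤ c i • A i D' := by
    intro i
    refine Measure.le_iff.mpr fun T hT => ?_
    have h := h1 i D D' hDD' T hT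
    calc A i D T = ENNReal.ofReal ((A i D T).toReal) :=
          (ENNReal.ofReal_toReal (measure_ne_top _ _)).symm
      _ ≤ ENNReal.ofReal (Real.exp (ε i) * (A i D' T).toReal) :=
          ENNReal.ofReal_le_ofReal h
      _ = c i * ENNReal.ofReal ((A i D' T).toReal) :=
          ENNReal.ofReal_mul (Real.exp_nonneg _)
      _ = (c i • A i D') T := by
          rw [ENNReal.ofReal_toReal (measure_ne_top _ _)]; rfl
  have key : Measure.pi (fun i => A i D) S ≤ (∏ i, c i) * Measure.pi (fun i => A i D') S := by
    have := pi_mono_aux (fun i => A i D) (fun i => c i • A i D') hle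
    have h2 := pi_smul_aux (fun i => A i D') c hc
    calc Measure.pi (fun i => A i D) S ≤ Measure.pi (fun i => c i • A i D') S := Measure.le_iff'.mp this S
      _ = (∏ i, c i) * Measure.pi (fun i => A i D') S := by
          rw [h2]; rfl
  have hprod : (∏ i, c i) = ENNReal.ofReal (Real.exp (∑ i, ε i)) := by
    rw [Real.exp_sum]
    rw [← ENNReal.ofReal_prod_of_nonneg fun i _ => Real.exp_nonneg _]
  have hfin : (∏ i, c i) * Measure.pi (fun i => A i D') S ≠ ⊤ := by
    rw [hprod]
    exact ENNReal.mul_ne_top ENNReal.ofReal_ne_top (measure_ne_top _ _)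
  calc (Measure.pi (fun i => A i D) S).toReal
      ≤ ((∏ i, c i) * Measure.pi (fun i => A i D') S).toReal :=
        ENNReal.toReal_mono hfin key
    _ = Real.exp (∑ i, ε i) * (Measure.pi (fun i => A i D') S).toReal := by
        rw [hprod, ENNReal.toReal_mul, ENNReal.toReal_ofReal (Real.exp_nonneg _)]
end

section
/- Let (Ω, F, μ) be a probability space with a filtration 𝒻 indexed by ℕ, let T be a finite horizon, and let Z : ℕ → Ω → ℝ be an adapted process with each Z t bounded and measurable. Define the Snell envelope U by backward recursion: U T = Z T and U t = max(Z t, μ[U (t+1) | 𝒻 t]) for t < T. Then for every t ≤ T and every stopping time τ (with respect to 𝒻) satisfying t ≤ τ ≤ T almost surely, μ[Z_τ | 𝒻 t] ≤ U t almost everywhere, where Z_τ(ω) = Z (τ ω) ω is the payoff at the stopping time. -/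
/-!
Backward induction on `t`. On `{τ ≤ t}` we have `τ = t` a.e., so the payoff there is `Z t ≤ U t`.
On the complement `τ` agrees with the stopping time `max τ (t + 1)`, and since that complement
is `𝒻 t`-measurable, the tower property and the inductive hypothesis at `t + 1` bound the
conditional payoff there by `μ[U (t + 1) | 𝒻 t] ≤ U t`.
-/

open MeasureTheory Filter

section

variable {Ω : Type*} {mΩ : MeasurableSpace Ω} {μ : Measure Ω}

lemma measurable_of_isStoppingTime_coe {𝒻 : Filtration ℕ mΩ} {τ : Ω → ℕ}
    (hτ : IsStoppingTime 𝒻 (fun ω => (τ ω : WithTop ℕ))) : Measurable τ :=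
  (measurable_of_countable (WithTop.untopD 0)).comp hτ.measurable'

lemma measurableSet_le_of_isStoppingTime_coe {𝒻 : Filtration ℕ mΩ} {τ : Ω → ℕ}
    (hτ : IsStoppingTime 𝒻 (fun ω => (τ ω : WithTop ℕ))) (t : ℕ) :
    MeasurableSet[𝒻 t] {ω | τ ω ≤ t} := by
  simpa using hτ t

lemma isStoppingTime_coe_max_const {𝒻 : Filtration ℕ mΩ} {τ : Ω → ℕ}
    (hτ : IsStoppingTime 𝒻 (fun ω => (τ ω : WithTop ℕ))) (n : ℕ) :
    IsStoppingTime 𝒻 (fun ω => (max (τ ω) n : ℕ) : Ω → WithTop ℕ) := by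
  intro i
  simpa [Set.ofPred_and] using (hτ i).inter (isStoppingTime_const 𝒻 n i)

lemma integrable_stopped_of_ae_le {Z : ℕ → Ω → ℝ} {τ : Ω → ℕ} {T : ℕ} (hτ : Measurable τ)
    (hZ : ∀ s, Integrable (Z s) μ) (hτT : ∀ᵐ ω ∂μ, τ ω ≤ T) :
    Integrable (fun ω => Z (τ ω) ω) μ := by
  classical
  refine (integrable_finsetSum (Finset.range (T + 1)) fun s _ =>
    (hZ s).indicator (hτ (measurableSet_singleton s))).congr ?_
  filter_upwards [hτT] with ω hω
  simp [Set.indicator_apply, Nat.lt_succ_of_le hω]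

lemma stopped_ae_eq_indicator_add_indicator_compl {Z : ℕ → Ω → ℝ} {τ : Ω → ℕ} {t : ℕ}
    (hτ : ∀ᵐ ω ∂μ, t ≤ τ ω) :
    (fun ω => Z (τ ω) ω) =ᵐ[μ] {ω | τ ω ≤ t}.indicator (Z t) +
      {ω | τ ω ≤ t}ᶜ.indicator (fun ω => Z (max (τ ω) (t + 1)) ω) := by
  filter_upwards [hτ] with ω hω
  by_cases h : τ ω ≤ t
  · simp [le_antisymm h hω]
  · simp [h, max_eq_left (show t + 1 ≤ τ ω by omega)]

lemma condExp_indicator_add_indicator_compl {E : Type*} [NormedAddCommGroup E] [NormedSpace ℝ E]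
    [CompleteSpace E] {m : MeasurableSpace Ω} {A : Set Ω} {f g : Ω → E} (hm : m ≤ mΩ)
    [SigmaFinite (μ.trim hm)] (hA : MeasurableSet[m] A) (hf : StronglyMeasurable[m] f)
    (hfi : Integrable f μ) (hg : Integrable g μ) :
    μ[A.indicator f + Aᶜ.indicator g | m] =ᵐ[μ] A.indicator f + Aᶜ.indicator μ[g | m] := by
  have hAf : μ[A.indicator f | m] = A.indicator f :=
    condExp_of_stronglyMeasurable hm (hf.indicator hA) (hfi.indicator (hm _ hA))
  filter_upwards [condExp_add (hfi.indicator (hm _ hA)) (hg.indicator (hm _ hA.compl)) m,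
    condExp_indicator hg hA.compl] with ω hadd hind
  rw [hadd, Pi.add_apply, hAf, hind, Pi.add_apply]

structure IsSnellEnvelope (μ : Measure Ω) (𝒻 : Filtration ℕ mΩ) (T : ℕ) (Z U : ℕ → Ω → ℝ) :
    Prop where
  terminal : U T = Z T
  step : ∀ t < T, U t = fun ω => max (Z t ω) (μ[U (t + 1) | 𝒻 t] ω)

namespace IsSnellEnvelope

variable {𝒻 : Filtration ℕ mΩ} {T : ℕ} {Z U : ℕ → Ω → ℝ}

lemma payoff_le (hU : IsSnellEnvelope μ 𝒻 T Z U) {t : ℕ} (ht : t < T) : Z t ≤ U t := by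
  rw [hU.step t ht]
  exact fun ω => le_max_left _ _

lemma condExp_succ_le (hU : IsSnellEnvelope μ 𝒻 T Z U) {t : ℕ} (ht : t < T) :
    μ[U (t + 1) | 𝒻 t] ≤ U t := by
  rw [hU.step t ht]
  exact fun ω => le_max_right _ _

lemma integrable (hU : IsSnellEnvelope μ 𝒻 T Z U) (hZ : ∀ s, Integrable (Z s) μ) {t : ℕ}
    (ht : t ≤ T) : Integrable (U t) μ := by
  induction ht using Nat.decreasingInduction with
  | self => exact hU.terminal ▸ hZ T
  | of_succ t ht _ =>
    rw [hU.step t ht]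
    exact (hZ t).sup integrable_condExp

variable [IsFiniteMeasure μ]

lemma condExp_stopped_le_of_succ (hU : IsSnellEnvelope μ 𝒻 T Z U) (hadapt : Adapted 𝒻 Z)
    (hZ : ∀ s, Integrable (Z s) μ) {t : ℕ} (ht : t < T) {τ : Ω → ℕ}
    (hτ : IsStoppingTime 𝒻 (fun ω => (τ ω : WithTop ℕ)))
    (hτ_ge : ∀ᵐ ω ∂μ, t ≤ τ ω) (hτ_le : ∀ᵐ ω ∂μ, τ ω ≤ T)
    (hnext : μ[fun ω => Z (max (τ ω) (t + 1)) ω | 𝒻 (t + 1)] ≤ᵐ[μ] U (t + 1)) :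
    μ[fun ω => Z (τ ω) ω | 𝒻 t] ≤ᵐ[μ] U t := by
  set A := {ω | τ ω ≤ t}
  set Zσ := fun ω => Z (max (τ ω) (t + 1)) ω
  have hA : MeasurableSet[𝒻 t] A := measurableSet_le_of_isStoppingTime_coe hτ t
  have hZσ : Integrable Zσ μ :=
    integrable_stopped_of_ae_le
      (measurable_of_isStoppingTime_coe (isStoppingTime_coe_max_const hτ (t + 1))) hZ
      (hτ_le.mono fun ω hω => max_le hω ht)
  have hsplit : μ[fun ω => Z (τ ω) ω | 𝒻 t] =ᵐ[μ] A.indicator (Z t) + Aᶜ.indicator μ[Zσ | 𝒻 t] :=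
    (condExp_congr_ae (stopped_ae_eq_indicator_add_indicator_compl hτ_ge)).trans
      (condExp_indicator_add_indicator_compl (𝒻.le t) hA (hadapt t).stronglyMeasurable (hZ t) hZσ)
  have hcont : μ[Zσ | 𝒻 t] ≤ᵐ[μ] U t := by
    calc μ[Zσ | 𝒻 t]
        =ᵐ[μ] μ[μ[Zσ | 𝒻 (t + 1)] | 𝒻 t] :=
          (condExp_condExp_of_le (𝒻.mono t.le_succ) (𝒻.le (t + 1))).symm
      _ ≤ᵐ[μ] μ[U (t + 1) | 𝒻 t] :=
          condExp_mono integrable_condExp (hU.integrable hZ ht) hnext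
      _ ≤ᵐ[μ] U t := ae_of_all _ (hU.condExp_succ_le ht)
  filter_upwards [hsplit, hcont] with ω hω hωcont
  rw [hω, Pi.add_apply]
  by_cases h : ω ∈ A
  · simpa [h] using hU.payoff_le ht ω
  · simpa [h] using hωcont

lemma condExp_stopped_le (hU : IsSnellEnvelope μ 𝒻 T Z U) (hadapt : Adapted 𝒻 Z)
    (hZ : ∀ s, Integrable (Z s) μ) {t : ℕ} (ht : t ≤ T) {τ : Ω → ℕ}
    (hτ : IsStoppingTime 𝒻 (fun ω => (τ ω : WithTop ℕ)))
    (hτ_ge : ∀ᵐ ω ∂μ, t ≤ τ ω) (hτ_le : ∀ᵐ ω ∂μ, τ ω ≤ T) :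
    μ[fun ω => Z (τ ω) ω | 𝒻 t] ≤ᵐ[μ] U t := by
  induction ht using Nat.decreasingInduction generalizing τ with
  | self =>
    have hτT : (fun ω => Z (τ ω) ω) =ᵐ[μ] Z T := by
      filter_upwards [hτ_ge, hτ_le] with ω hge hle
      rw [le_antisymm hle hge]
    refine (condExp_congr_ae hτT).le.trans (EventuallyEq.le ?_)
    rw [condExp_of_stronglyMeasurable (𝒻.le T) (hadapt T).stronglyMeasurable (hZ T), hU.terminal]
  | of_succ t ht ih =>
    exact hU.condExp_stopped_le_of_succ hadapt hZ ht hτ hτ_ge hτ_le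
      (ih (isStoppingTime_coe_max_const hτ (t + 1)) (ae_of_all _ fun ω => le_max_right _ _)
        (hτ_le.mono fun ω hω => max_le hω ht))

end IsSnellEnvelope

end

theorem stmt4_general {Ω : Type*} {mΩ : MeasurableSpace Ω} {μ : Measure Ω} [IsProbabilityMeasure μ]
    (𝒻 : Filtration ℕ mΩ) (T : ℕ) (Z : ℕ → Ω → ℝ)
    (hadapt : Adapted 𝒻 Z)
    (hbdd : ∀ t, ∃ C : ℝ, ∀ ω, |Z t ω| ≤ C)
    (U : ℕ → Ω → ℝ)
    (hUT : U T = Z T)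
    (hU : ∀ t < T, U t = fun ω => max (Z t ω) ((μ[U (t + 1) | 𝒻 t]) ω))
    (t : ℕ) (ht : t ≤ T)
    (τ : Ω → ℕ) (hτ : IsStoppingTime 𝒻 (fun ω => (τ ω : WithTop ℕ)))
    (hτ_ge : ∀ᵐ ω ∂μ, t ≤ τ ω) (hτ_le : ∀ᵐ ω ∂μ, τ ω ≤ T) :
    ∀ᵐ ω ∂μ, (μ[fun ω' => Z (τ ω') ω' | 𝒻 t]) ω ≤ U t ω := by
  have hZ : ∀ s, Integrable (Z s) μ := fun s =>
    let ⟨C, hC⟩ := hbdd s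
    .of_bound hadapt.measurable.aestronglyMeasurable C (ae_of_all _ hC)
  exact IsSnellEnvelope.condExp_stopped_le ⟨hUT, hU⟩ hadapt hZ ht hτ hτ_ge hτ_le

/-- The Snell envelope dominates the conditional expected payoff of every stopping time:
for any stopping time `τ` with `t ≤ τ ≤ T` a.s., `μ[Z_τ | 𝒻 t] ≤ U t` a.e. -/
theorem stmt4 {Ω : Type*} {mΩ : MeasurableSpace Ω} {μ : Measure Ω} [IsProbabilityMeasure μ]
    (𝒻 : Filtration ℕ mΩ) (T : ℕ) (Z : ℕ → Ω → ℝ)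
    (hadapt : Adapted 𝒻 Z)
    (hmeas : ∀ t, Measurable (Z t))
    (hbdd : ∀ t, ∃ C : ℝ, ∀ ω, |Z t ω| ≤ C)
    (U : ℕ → Ω → ℝ)
    (hUT : U T = Z T)
    (hU : ∀ t < T, U t = fun ω => max (Z t ω) ((μ[U (t + 1) | 𝒻 t]) ω))
    (t : ℕ) (ht : t ≤ T)
    (τ : Ω → ℕ) (hτ : IsStoppingTime 𝒻 (fun ω => (τ ω : WithTop ℕ)))
    (hτ_ge : ∀ᵐ ω ∂μ, t ≤ τ ω) (hτ_le : ∀ᵐ ω ∂μ, τ ω ≤ T) :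
    ∀ᵐ ω ∂μ, (μ[fun ω' => Z (τ ω') ω' | 𝒻 t]) ω ≤ U t ω :=
  stmt4_general 𝒻 T Z hadapt hbdd U hUT hU t ht τ hτ hτ_ge hτ_le
end

section
/- Let (Ω, F, μ) be a probability space with a filtration 𝒻 indexed by ℕ, T a finite horizon, and Z : ℕ → Ω → ℝ an adapted process with each Z t bounded and measurable. Let U be the Snell envelope of Z. Then the optimal stopping problem over the finite horizon has a solution: the supremum of E[Z_τ] over all stopping times τ with τ ≤ T equals E[U 0], and it is attained by the stopping time τ*(ω) = min{s ≤ T | U s ω = Z s ω}. -/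
/-!
For a stopping time `τ ≤ T`, the payoff `X t` of "stop at `τ` if `τ < t`, otherwise collect
`U t`" interpolates between `X 0 = U 0` and `X T = Z_τ`. Since `{t < τ} ∈ 𝒻 t`, the expected
increment `E[X (t+1)] - E[X t]` equals
`E[Z t - U t; τ = t] + E[E[U (t+1) | 𝒻 t] - U t; t < τ]`.
Both terms are `≤ 0` because `U t = max (Z t) E[U (t+1) | 𝒻 t]`, and both vanish for `τ*`:
it stops exactly when `U = Z`, and before that the maximum is attained by the conditional
expectation.
-/

open MeasureTheory

section OptimalStopping

variable {Ω : Type*} {mΩ : MeasurableSpace Ω} {μ : Measure Ω} {𝒻 : Filtration ℕ mΩ}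
  {Z U : ℕ → Ω → ℝ} {τ : Ω → ℕ}

lemma isStoppingTime_sInf_setOf_mem {A : ℕ → Set Ω} (hA : ∀ s, MeasurableSet[𝒻 s] (A s))
    (hne : ∀ ω, ∃ s, ω ∈ A s) :
    IsStoppingTime 𝒻 (fun ω => ((sInf {s | ω ∈ A s} : ℕ) : WithTop ℕ)) := by
  intro t
  have hset : {ω | sInf {s | ω ∈ A s} ≤ t} = ⋃ s ∈ Finset.range (t + 1), A s := by
    ext ω
    simp only [Set.mem_ofPred_eq, Set.mem_iUnion, Finset.mem_range, Nat.lt_succ_iff, exists_prop]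
    exact ⟨fun h => ⟨_, h, Nat.sInf_mem (hne ω)⟩, fun ⟨s, hst, hs⟩ => (Nat.sInf_le hs).trans hst⟩
  simpa [hset] using Finset.measurableSet_biUnion (Finset.range (t + 1))
    fun s hs => 𝒻.mono (Nat.lt_succ_iff.mp (Finset.mem_range.mp hs)) _ (hA s)

variable (Z U τ) in
def stopOrContinue (t : ℕ) (ω : Ω) : ℝ :=
  if τ ω < t then Z (τ ω) ω else U t ω

lemma stopOrContinue_zero : stopOrContinue Z U τ 0 = U 0 := by
  ext ω; simp [stopOrContinue]

lemma stopOrContinue_of_le {T : ℕ} (hτT : ∀ ω, τ ω ≤ T) (hUT : U T = Z T) :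
    stopOrContinue Z U τ T = fun ω => Z (τ ω) ω := by
  ext ω
  rcases (hτT ω).lt_or_eq with h | h
  · simp [stopOrContinue, h]
  · simp [stopOrContinue, h, hUT]

lemma stopOrContinue_succ (t : ℕ) :
    stopOrContinue Z U τ (t + 1) = stopOrContinue Z U τ t
      + {ω | τ ω = t}.indicator (Z t - U t) + {ω | t < τ ω}.indicator (U (t + 1) - U t) := by
  ext ω
  rcases lt_trichotomy (τ ω) t with h | h | h
  · simp [stopOrContinue, h, h.ne, h.not_gt, Nat.lt_succ_of_lt h]
  · simp [stopOrContinue, h]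
  · simp [stopOrContinue, h, h.ne', h.not_gt, not_le.mpr h]

lemma integrable_stopOrContinue (hτ : IsStoppingTime 𝒻 (fun ω => (τ ω : WithTop ℕ))) {T : ℕ}
    (hZ : ∀ t < T, Integrable (Z t) μ) (hU : ∀ t ≤ T, Integrable (U t) μ) :
    Integrable (stopOrContinue Z U τ T) μ := by
  induction T with
  | zero => simpa [stopOrContinue_zero] using hU 0 le_rfl
  | succ t ih =>
    have heq : MeasurableSet {ω | τ ω = t} :=
      𝒻.le t _ (by simpa using hτ.measurableSet_eq_of_countable t)
    have hgt : MeasurableSet {ω | t < τ ω} := 𝒻.le t _ (by simpa using hτ.measurableSet_gt t)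
    rw [stopOrContinue_succ]
    exact ((ih (fun s hs => hZ s (by omega)) (fun s hs => hU s (by omega))).add
      (((hZ t (by omega)).sub (hU t (by omega))).indicator heq)).add
      (((hU (t + 1) le_rfl).sub (hU t (by omega))).indicator hgt)

variable [SigmaFiniteFiltration μ 𝒻]

lemma integral_stopOrContinue_succ (hτ : IsStoppingTime 𝒻 (fun ω => (τ ω : WithTop ℕ))) {t : ℕ}
    (hX : Integrable (stopOrContinue Z U τ t) μ) (hZ : Integrable (Z t) μ)
    (hU : Integrable (U t) μ) (hU' : Integrable (U (t + 1)) μ) :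
    ∫ ω, stopOrContinue Z U τ (t + 1) ω ∂μ = ∫ ω, stopOrContinue Z U τ t ω ∂μ
      + ∫ ω in {ω | τ ω = t}, (Z t ω - U t ω) ∂μ
      + ∫ ω in {ω | t < τ ω}, ((μ[U (t + 1) | 𝒻 t]) ω - U t ω) ∂μ := by
  have heq : MeasurableSet {ω | τ ω = t} :=
    𝒻.le t _ (by simpa using hτ.measurableSet_eq_of_countable t)
  have hgt : MeasurableSet[𝒻 t] {ω | t < τ ω} := by simpa using hτ.measurableSet_gt t
  rw [stopOrContinue_succ, integral_add' (hX.add ((hZ.sub hU).indicator heq))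
      ((hU'.sub hU).indicator (𝒻.le t _ hgt)), integral_add' hX ((hZ.sub hU).indicator heq),
    integral_indicator heq, integral_indicator (𝒻.le t _ hgt), integral_sub' hU'.integrableOn
      hU.integrableOn, integral_sub integrable_condExp.integrableOn hU.integrableOn,
    setIntegral_condExp (𝒻.le t) hU' hgt]
  rfl

lemma integral_stopOrContinue_eq (hτ : IsStoppingTime 𝒻 (fun ω => (τ ω : WithTop ℕ))) {T : ℕ}
    (hZ : ∀ t < T, Integrable (Z t) μ) (hU : ∀ t ≤ T, Integrable (U t) μ) :
    ∫ ω, stopOrContinue Z U τ T ω ∂μ = ∫ ω, U 0 ω ∂μ + ∑ t ∈ Finset.range T,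
      (∫ ω in {ω | τ ω = t}, (Z t ω - U t ω) ∂μ
        + ∫ ω in {ω | t < τ ω}, ((μ[U (t + 1) | 𝒻 t]) ω - U t ω) ∂μ) := by
  induction T with
  | zero => simp [stopOrContinue_zero]
  | succ t ih =>
    have hZ' : ∀ s < t, Integrable (Z s) μ := fun s hs => hZ s (by omega)
    have hU' : ∀ s ≤ t, Integrable (U s) μ := fun s hs => hU s (by omega)
    rw [integral_stopOrContinue_succ hτ (integrable_stopOrContinue hτ hZ' hU') (hZ t (by omega))
      (hU t (by omega)) (hU (t + 1) le_rfl), ih hZ' hU', Finset.sum_range_succ]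
    ring

lemma integral_stoppedValue_le_integral_zero (hτ : IsStoppingTime 𝒻 (fun ω => (τ ω : WithTop ℕ)))
    {T : ℕ} (hτT : ∀ ω, τ ω ≤ T) (hUT : U T = Z T)
    (hZ : ∀ t < T, Integrable (Z t) μ) (hU : ∀ t ≤ T, Integrable (U t) μ)
    (hZU : ∀ t < T, ∀ ω, Z t ω ≤ U t ω) (hCU : ∀ t < T, ∀ ω, (μ[U (t + 1) | 𝒻 t]) ω ≤ U t ω) :
    ∫ ω, Z (τ ω) ω ∂μ ≤ ∫ ω, U 0 ω ∂μ := by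
  rw [← stopOrContinue_of_le hτT hUT, integral_stopOrContinue_eq hτ hZ hU, add_le_iff_nonpos_right]
  refine Finset.sum_nonpos fun t ht => add_nonpos ?_ ?_
  · exact setIntegral_nonpos (𝒻.le t _ (by simpa using hτ.measurableSet_eq_of_countable t))
      fun ω _ => sub_nonpos.mpr (hZU t (Finset.mem_range.mp ht) ω)
  · exact setIntegral_nonpos (𝒻.le t _ (by simpa using hτ.measurableSet_gt t))
      fun ω _ => sub_nonpos.mpr (hCU t (Finset.mem_range.mp ht) ω)

lemma integral_stoppedValue_eq_integral_zero (hτ : IsStoppingTime 𝒻 (fun ω => (τ ω : WithTop ℕ)))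
    {T : ℕ} (hτT : ∀ ω, τ ω ≤ T) (hUT : U T = Z T)
    (hZ : ∀ t < T, Integrable (Z t) μ) (hU : ∀ t ≤ T, Integrable (U t) μ)
    (hstop : ∀ t < T, ∀ ω, τ ω = t → Z t ω = U t ω)
    (hcont : ∀ t < T, ∀ ω, t < τ ω → (μ[U (t + 1) | 𝒻 t]) ω = U t ω) :
    ∫ ω, Z (τ ω) ω ∂μ = ∫ ω, U 0 ω ∂μ := by
  rw [← stopOrContinue_of_le hτT hUT, integral_stopOrContinue_eq hτ hZ hU, add_eq_left]
  refine Finset.sum_eq_zero fun t ht => ?_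
  have hT : t < T := Finset.mem_range.mp ht
  have hstopped : ∫ ω in {ω | τ ω = t}, (Z t ω - U t ω) ∂μ = 0 :=
    setIntegral_eq_zero_of_forall_eq_zero fun ω hω => sub_eq_zero.mpr (hstop t hT ω hω)
  have hcontinued : ∫ ω in {ω | t < τ ω}, ((μ[U (t + 1) | 𝒻 t]) ω - U t ω) ∂μ = 0 :=
    setIntegral_eq_zero_of_forall_eq_zero fun ω hω => sub_eq_zero.mpr (hcont t hT ω hω)
  rw [hstopped, hcontinued, add_zero]

end OptimalStopping

section SnellEnvelope

variable {Ω : Type*} {mΩ : MeasurableSpace Ω} {μ : Measure Ω} {𝒻 : Filtration ℕ mΩ}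
  {Z U : ℕ → Ω → ℝ} {T : ℕ}

lemma measurable_snellEnvelope (hZ : Adapted 𝒻 Z) (hUT : U T = Z T)
    (hU : ∀ t < T, U t = fun ω => max (Z t ω) ((μ[U (t + 1) | 𝒻 t]) ω)) :
    ∀ t ≤ T, Measurable[𝒻 t] (U t) := by
  intro t ht
  rcases ht.lt_or_eq with ht | rfl
  · rw [hU t ht]
    exact (hZ t).max stronglyMeasurable_condExp.measurable
  · exact hUT ▸ hZ t

lemma integrable_snellEnvelope (hZ : ∀ t, Integrable (Z t) μ) (hUT : U T = Z T)
    (hU : ∀ t < T, U t = fun ω => max (Z t ω) ((μ[U (t + 1) | 𝒻 t]) ω)) :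
    ∀ t ≤ T, Integrable (U t) μ := by
  intro t ht
  rcases ht.lt_or_eq with ht | rfl
  · rw [hU t ht]
    exact (hZ t).sup integrable_condExp
  · exact hUT ▸ hZ t

lemma condExp_eq_snellEnvelope_of_ne
    (hU : ∀ t < T, U t = fun ω => max (Z t ω) ((μ[U (t + 1) | 𝒻 t]) ω)) {t : ℕ} (ht : t < T)
    {ω : Ω} (hUZ : U t ω ≠ Z t ω) : (μ[U (t + 1) | 𝒻 t]) ω = U t ω := by
  have hmax := congrFun (hU t ht) ω
  rcases max_choice (Z t ω) ((μ[U (t + 1) | 𝒻 t]) ω) with h | h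
  · exact absurd (hmax.trans h) hUZ
  · exact (hmax.trans h).symm

lemma isStoppingTime_sInf_snellEnvelope_eq (hZ : Adapted 𝒻 Z) (hUT : U T = Z T)
    (hU : ∀ t < T, U t = fun ω => max (Z t ω) ((μ[U (t + 1) | 𝒻 t]) ω)) :
    IsStoppingTime 𝒻 (fun ω => ((sInf {s | s ≤ T ∧ U s ω = Z s ω} : ℕ) : WithTop ℕ)) := by
  refine isStoppingTime_sInf_setOf_mem (A := fun s => {ω | s ≤ T ∧ U s ω = Z s ω}) (fun s => ?_)
    fun ω => ⟨T, le_rfl, congrFun hUT ω⟩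
  by_cases hs : s ≤ T
  · simpa [hs] using measurableSet_eq_fun (measurable_snellEnvelope hZ hUT hU s hs) (hZ s)
  · simp [hs]

end SnellEnvelope

theorem stmt6_general {Ω : Type*} {mΩ : MeasurableSpace Ω} {μ : Measure Ω} [IsProbabilityMeasure μ]
    (𝒻 : Filtration ℕ mΩ) (T : ℕ) (Z : ℕ → Ω → ℝ)
    (hadapt : Adapted 𝒻 Z)
    (hbdd : ∀ t, ∃ C : ℝ, ∀ ω, |Z t ω| ≤ C)
    (U : ℕ → Ω → ℝ)
    (hUT : U T = Z T)
    (hU : ∀ t < T, U t = fun ω => max (Z t ω) ((μ[U (t + 1) | 𝒻 t]) ω))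
    (τstar : Ω → ℕ)
    (hτstar : ∀ ω, τstar ω = sInf {s : ℕ | s ≤ T ∧ U s ω = Z s ω}) :
    IsStoppingTime 𝒻 (fun ω => (τstar ω : WithTop ℕ)) ∧ (∀ ω, τstar ω ≤ T) ∧
    (∫ ω, Z (τstar ω) ω ∂μ = ∫ ω, U 0 ω ∂μ) ∧
    (∀ τ : Ω → ℕ, IsStoppingTime 𝒻 (fun ω => (τ ω : WithTop ℕ)) → (∀ ω, τ ω ≤ T) →
      ∫ ω, Z (τ ω) ω ∂μ ≤ ∫ ω, U 0 ω ∂μ) := by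
  have hZ : ∀ t, Integrable (Z t) μ := fun t => by
    obtain ⟨C, hC⟩ := hbdd t
    exact .of_bound ((hadapt t).mono (𝒻.le t) le_rfl).aestronglyMeasurable C (ae_of_all _ hC)
  have hUint := integrable_snellEnvelope hZ hUT hU
  have hτstar_mem : ∀ ω, τstar ω ≤ T ∧ U (τstar ω) ω = Z (τstar ω) ω := fun ω =>
    hτstar ω ▸ Nat.sInf_mem (s := {s | s ≤ T ∧ U s ω = Z s ω}) ⟨T, le_rfl, congrFun hUT ω⟩
  have hτstar_lt : ∀ ω, ∀ t < τstar ω, ¬(t ≤ T ∧ U t ω = Z t ω) := fun ω t ht =>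
    Nat.notMem_of_lt_sInf (hτstar ω ▸ ht)
  have hτstar_stop : IsStoppingTime 𝒻 (fun ω => (τstar ω : WithTop ℕ)) := by
    simpa only [hτstar] using isStoppingTime_sInf_snellEnvelope_eq hadapt hUT hU
  refine ⟨hτstar_stop, fun ω => (hτstar_mem ω).1, ?_, fun τ hτ hτT => ?_⟩
  · exact integral_stoppedValue_eq_integral_zero hτstar_stop (fun ω => (hτstar_mem ω).1) hUT
      (fun t _ => hZ t) hUint (fun t _ ω hω => hω ▸ (hτstar_mem ω).2.symm)
      fun t ht ω hω => condExp_eq_snellEnvelope_of_ne hU ht fun h => hτstar_lt ω t hω ⟨ht.le, h⟩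
  · refine integral_stoppedValue_le_integral_zero hτ hτT hUT (fun t _ => hZ t) hUint
      (fun t ht ω => ?_) fun t ht ω => ?_ <;> simp [hU t ht]

/-- Solution of the finite-horizon optimal stopping problem: the supremum of `E[Z_τ]` over
stopping times `τ ≤ T` equals `E[U 0]`, and is attained by the first time the payoff touches
the Snell envelope. -/
theorem stmt6 {Ω : Type*} {mΩ : MeasurableSpace Ω} {μ : Measure Ω} [IsProbabilityMeasure μ]
    (𝒻 : Filtration ℕ mΩ) (T : ℕ) (Z : ℕ → Ω → ℝ)
    (hadapt : Adapted 𝒻 Z)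
    (hmeas : ∀ t, Measurable (Z t))
    (hbdd : ∀ t, ∃ C : ℝ, ∀ ω, |Z t ω| ≤ C)
    (U : ℕ → Ω → ℝ)
    (hUT : U T = Z T)
    (hU : ∀ t < T, U t = fun ω => max (Z t ω) ((μ[U (t + 1) | 𝒻 t]) ω))
    (τstar : Ω → ℕ)
    (hτstar : ∀ ω, τstar ω = sInf {s : ℕ | s ≤ T ∧ U s ω = Z s ω}) :
    IsStoppingTime 𝒻 (fun ω => (τstar ω : WithTop ℕ)) ∧ (∀ ω, τstar ω ≤ T) ∧
    (∫ ω, Z (τstar ω) ω ∂μ = ∫ ω, U 0 ω ∂μ) ∧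
    (∀ τ : Ω → ℕ, IsStoppingTime 𝒻 (fun ω => (τ ω : WithTop ℕ)) → (∀ ω, τ ω ≤ T) →
      ∫ ω, Z (τ ω) ω ∂μ ≤ ∫ ω, U 0 ω ∂μ) :=
  stmt6_general 𝒻 T Z hadapt hbdd U hUT hU τstar hτstar
end

section
/- Let μ be a probability measure on ℝ and let F : ℝ → ℝ be its cumulative distribution function, F x = (μ (Iic x)).toReal. For c ∈ (0,1) define the quantile Q c = sInf {x ∈ ℝ | c ≤ F x} (this set is nonempty and bounded below since μ is a probability measure and 0 < c < 1). Then the pushforward under Q of the uniform probability measure on the interval (0,1) (Lebesgue measure restricted to (0,1)) equals μ; i.e. inverse-transform sampling from the uniform distribution reproduces μ. -/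
/-!
The quantile function `Q` is the lower adjoint of the CDF `F` on `(0,1)`: by monotonicity and
right-continuity of `F`, `Q c ≤ x ↔ c ≤ F x`. Hence `Q⁻¹' (Iic x) ∩ (0,1) = (0, F x] ∩ (0,1)`,
a set of Lebesgue measure `F x = μ (Iic x)`, and a measure on `ℝ` is determined by its values on
the rays `Iic x`.
-/

open MeasureTheory Set Filter Topology ProbabilityTheory

namespace StieltjesFunction

variable (f : StieltjesFunction ℝ) {c : ℝ}

theorem le_apply_csInf_setOf_le (hne : {x | c ≤ f x}.Nonempty) : c ≤ f (sInf {x | c ≤ f x}) := by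
  have h_right : ∀ y ∈ Ioi (sInf {x | c ≤ f x}), c ≤ f y := fun y hy => by
    obtain ⟨s, hs, hsy⟩ := exists_lt_of_csInf_lt hne hy
    exact hs.trans (f.mono hsy.le)
  have h_tendsto : Tendsto f (𝓝[>] sInf {x | c ≤ f x}) (𝓝 (f (sInf {x | c ≤ f x}))) :=
    (f.right_continuous _).mono_left (nhdsWithin_mono _ Ioi_subset_Ici_self)
  exact ge_of_tendsto h_tendsto (eventually_mem_nhdsWithin.mono h_right)

theorem csInf_setOf_le_le_iff (hne : {x | c ≤ f x}.Nonempty) (hbdd : BddBelow {x | c ≤ f x})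
    (y : ℝ) : sInf {x | c ≤ f x} ≤ y ↔ c ≤ f y :=
  ⟨fun h => (f.le_apply_csInf_setOf_le hne).trans (f.mono h), fun h => csInf_le hbdd h⟩

end StieltjesFunction

theorem Real.volume_restrict_Ioo_zero_one_Iic {t : ℝ} (ht : t ≤ 1) :
    volume.restrict (Ioo (0 : ℝ) 1) (Iic t) = ENNReal.ofReal t := by
  rw [Measure.restrict_congr_set Ioo_ae_eq_Ioc, Measure.restrict_apply measurableSet_Iic,
    Iic_inter_Ioc_of_le ht, Real.volume_Ioc, sub_zero]

namespace ProbabilityTheory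

variable (μ : Measure ℝ)

noncomputable def quantile (c : ℝ) : ℝ := sInf {x | c ≤ cdf μ x}

theorem nonempty_setOf_le_cdf {c : ℝ} (hc : c < 1) : {x | c ≤ cdf μ x}.Nonempty :=
  ((tendsto_cdf_atTop μ).eventually (eventually_ge_nhds hc)).exists

theorem bddBelow_setOf_le_cdf {c : ℝ} (hc : 0 < c) : BddBelow {x | c ≤ cdf μ x} := by
  obtain ⟨z, hz⟩ := ((tendsto_cdf_atBot μ).eventually (eventually_lt_nhds hc)).exists
  exact ⟨z, fun y hy => le_of_not_gt fun hyz => (hy.trans (monotone_cdf μ hyz.le)).not_gt hz⟩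

theorem quantile_le_iff {c : ℝ} (hc : c ∈ Ioo 0 1) (x : ℝ) : quantile μ c ≤ x ↔ c ≤ cdf μ x :=
  (cdf μ).csInf_setOf_le_le_iff (nonempty_setOf_le_cdf μ hc.2) (bddBelow_setOf_le_cdf μ hc.1) x

theorem monotoneOn_quantile : MonotoneOn (quantile μ) (Ioo 0 1) := fun _ hc _ hc' hcc' =>
  (quantile_le_iff μ hc _).2 (hcc'.trans ((quantile_le_iff μ hc' _).1 le_rfl))

theorem map_quantile_volume_restrict_Ioo [IsProbabilityMeasure μ] :
    (volume.restrict (Ioo (0 : ℝ) 1)).map (quantile μ) = μ := by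
  have hmeas : AEMeasurable (quantile μ) (volume.restrict (Ioo 0 1)) :=
    aemeasurable_restrict_of_monotoneOn measurableSet_Ioo (monotoneOn_quantile μ)
  refine Measure.ext_of_Iic _ _ fun x => ?_
  have hpre : quantile μ ⁻¹' Iic x ∩ Ioo 0 1 = Iic (cdf μ x) ∩ Ioo 0 1 := by
    ext c
    simp only [mem_inter_iff, mem_preimage, mem_Iic, and_congr_left_iff]
    exact fun hc => quantile_le_iff μ hc x
  rw [Measure.map_apply_of_aemeasurable hmeas measurableSet_Iic,
    Measure.restrict_apply' measurableSet_Ioo, hpre, ← Measure.restrict_apply' measurableSet_Ioo,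
    Real.volume_restrict_Ioo_zero_one_Iic (cdf_le_one μ x), ofReal_cdf]

end ProbabilityTheory

/-- Inverse-transform sampling: pushing the uniform measure on `(0,1)` forward through the
quantile function `Q c = sInf {x | c ≤ F x}` of a probability measure `μ` on `ℝ`
reproduces `μ`. -/
theorem stmt8 (μ : Measure ℝ) [IsProbabilityMeasure μ]
    (F : ℝ → ℝ) (hF : ∀ x, F x = (μ (Iic x)).toReal)
    (Q : ℝ → ℝ) (hQ : ∀ c, Q c = sInf {x : ℝ | c ≤ F x}) :
    (volume.restrict (Ioo (0 : ℝ) 1)).map Q = μ := by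
  have hF_cdf : F = cdf μ := funext fun x => by rw [hF, cdf_eq_real, measureReal_def]
  subst hF_cdf
  have hQ_quantile : Q = quantile μ := funext hQ
  rw [hQ_quantile]
  exact map_quantile_volume_restrict_Ioo μ
end

section
/- Consider a finite-horizon sequential decision problem: let S be a countable state space, A a nonempty set of actions, T ∈ ℕ a horizon, r : ℕ → S → A → ℝ bounded reward functions, and κ : ℕ → S → A → PMF S transition probabilities. For a strategy π : ℕ → S → A define its value functions V^π by backward recursion: V^π_{T+1} = 0 and V^π_t(s) = r t s (π t s) + E_{s' ~ κ t s (π t s)}[V^π_{t+1}(s')] for t ≤ T. Suppose the strategy π admits no profitable one-shot deviation: for every t ≤ T, every s ∈ S, and every action a ∈ A, V^π_t(s) ≥ r t s a + E_{s' ~ κ t s a}[V^π_{t+1}(s')]. Then π is optimal among all strategies: for every strategy π', every t ≤ T+1 and every s ∈ S, V^π_t(s) ≥ V^{π'}_t(s). -/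
/-!
Backward induction on `t`. The no-deviation hypothesis at `t` compares `V π t s` with the
one-step value of any action played against the continuation `V π (t + 1)`; by the induction
hypothesis `V π' (t + 1) ≤ V π (t + 1)`, and taking expectations preserves this inequality, so
`V π' t s ≤ V π t s`. Expectations are real `tsum`s, which are monotone only for summable
families, so one first shows, also by backward induction, that every `V π' t` is bounded.
-/

namespace PMF

variable {S : Type*} (p : PMF S)

lemma summable_toReal : Summable fun s => (p s).toReal :=
  ENNReal.summable_toReal (by simp [p.tsum_coe])

lemma tsum_toReal : ∑' s, (p s).toReal = 1 := by
  rw [← ENNReal.tsum_toReal_eq p.apply_ne_top, p.tsum_coe, ENNReal.toReal_one]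

variable {p}

lemma abs_toReal_mul_le {g : S → ℝ} {M : ℝ} (hg : ∀ s, |g s| ≤ M) (s : S) :
    |(p s).toReal * g s| ≤ (p s).toReal * M := by
  rw [abs_mul, abs_of_nonneg ENNReal.toReal_nonneg]
  exact mul_le_mul_of_nonneg_left (hg s) ENNReal.toReal_nonneg

lemma summable_toReal_mul_of_abs_le {g : S → ℝ} {M : ℝ} (hg : ∀ s, |g s| ≤ M) :
    Summable fun s => (p s).toReal * g s :=
  .of_norm_bounded ((p.summable_toReal).mul_right M) (abs_toReal_mul_le hg)

lemma abs_tsum_toReal_mul_le {g : S → ℝ} {M : ℝ} (hg : ∀ s, |g s| ≤ M) :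
    |∑' s, (p s).toReal * g s| ≤ M :=
  calc |∑' s, (p s).toReal * g s|
      ≤ ∑' s, (p s).toReal * M :=
        tsum_of_norm_bounded (f := fun s => (p s).toReal * g s)
          (p.summable_toReal.mul_right M).hasSum (abs_toReal_mul_le hg)
    _ = M := by rw [tsum_mul_right, p.tsum_toReal, one_mul]

lemma tsum_toReal_mul_mono {f g : S → ℝ} {M N : ℝ} (hf : ∀ s, |f s| ≤ M)
    (hg : ∀ s, |g s| ≤ N) (hfg : f ≤ g) :
    ∑' s, (p s).toReal * f s ≤ ∑' s, (p s).toReal * g s :=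
  Summable.tsum_le_tsum (fun s => mul_le_mul_of_nonneg_left (hfg s) ENNReal.toReal_nonneg)
    (summable_toReal_mul_of_abs_le hf) (summable_toReal_mul_of_abs_le hg)

end PMF

section FiniteHorizon

variable {S A : Type*} {T : ℕ} {r : ℕ → S → A → ℝ} {κ : ℕ → S → A → PMF S}
  {V : (ℕ → S → A) → ℕ → S → ℝ}

lemma exists_abs_value_le (hr : ∃ C : ℝ, ∀ t s a, |r t s a| ≤ C)
    (hV_end : ∀ π s, V π (T + 1) s = 0)
    (hV_rec : ∀ π t s, t ≤ T →
      V π t s = r t s (π t s) + ∑' s', ((κ t s (π t s)) s').toReal * V π (t + 1) s')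
    {t : ℕ} (ht : t ≤ T + 1) : ∃ M, ∀ π s, |V π t s| ≤ M := by
  obtain ⟨C, hC⟩ := hr
  induction ht using Nat.decreasingInduction with
  | self => exact ⟨0, fun π s => by simp [hV_end]⟩
  | of_succ t ht ih =>
    obtain ⟨M, hM⟩ := ih
    refine ⟨C + M, fun π s => ?_⟩
    rw [hV_rec π t s (Nat.lt_succ_iff.mp ht)]
    exact (abs_add_le _ _).trans (add_le_add (hC _ _ _) (PMF.abs_tsum_toReal_mul_le (hM π)))

lemma value_le_of_forall_deviation_le (hr : ∃ C : ℝ, ∀ t s a, |r t s a| ≤ C)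
    (hV_end : ∀ π s, V π (T + 1) s = 0)
    (hV_rec : ∀ π t s, t ≤ T →
      V π t s = r t s (π t s) + ∑' s', ((κ t s (π t s)) s').toReal * V π (t + 1) s')
    {π : ℕ → S → A}
    (hdev : ∀ t ≤ T, ∀ s a,
      r t s a + ∑' s', ((κ t s a) s').toReal * V π (t + 1) s' ≤ V π t s)
    (π' : ℕ → S → A) {t : ℕ} (ht : t ≤ T + 1) (s : S) : V π' t s ≤ V π t s := by
  induction ht using Nat.decreasingInduction generalizing s with
  | self => rw [hV_end, hV_end]
  | of_succ t ht ih =>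
    have htT : t ≤ T := Nat.lt_succ_iff.mp ht
    obtain ⟨M, hM⟩ := exists_abs_value_le hr hV_end hV_rec ht
    calc V π' t s
        = r t s (π' t s) + ∑' s', ((κ t s (π' t s)) s').toReal * V π' (t + 1) s' :=
          hV_rec π' t s htT
      _ ≤ r t s (π' t s) + ∑' s', ((κ t s (π' t s)) s').toReal * V π (t + 1) s' :=
          add_le_add_right (PMF.tsum_toReal_mul_mono (hM π') (hM π) ih) _
      _ ≤ V π t s := hdev t htT s (π' t s)

end FiniteHorizon

theorem stmt10_general {S : Type*} {A : Type*} (T : ℕ)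
    (r : ℕ → S → A → ℝ) (hr : ∃ C : ℝ, ∀ t s a, |r t s a| ≤ C)
    (κ : ℕ → S → A → PMF S)
    (V : (ℕ → S → A) → ℕ → S → ℝ)
    (hV_end : ∀ π s, V π (T + 1) s = 0)
    (hV_rec : ∀ π t s, t ≤ T →
      V π t s = r t s (π t s) + ∑' s', ((κ t s (π t s)) s').toReal * V π (t + 1) s')
    (π : ℕ → S → A)
    (hdev : ∀ t ≤ T, ∀ s a,
      r t s a + ∑' s', ((κ t s a) s').toReal * V π (t + 1) s' ≤ V π t s) :
    ∀ π' : ℕ → S → A, ∀ t ≤ T + 1, ∀ s, V π' t s ≤ V π t s :=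
  fun π' _ ht s => value_le_of_forall_deviation_le hr hV_end hV_rec hdev π' ht s

/-- One-shot deviation principle for a finite-horizon sequential decision problem: if the
strategy `π` admits no profitable one-shot deviation, then `π` is optimal among all
strategies. -/
theorem stmt10 {S : Type*} [Countable S] {A : Type*} [Nonempty A] (T : ℕ)
    (r : ℕ → S → A → ℝ) (hr : ∃ C : ℝ, ∀ t s a, |r t s a| ≤ C)
    (κ : ℕ → S → A → PMF S)
    (V : (ℕ → S → A) → ℕ → S → ℝ)
    (hV_end : ∀ π s, V π (T + 1) s = 0)
    (hV_rec : ∀ π t s, t ≤ T →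
      V π t s = r t s (π t s) + ∑' s', ((κ t s (π t s)) s').toReal * V π (t + 1) s')
    (π : ℕ → S → A)
    (hdev : ∀ t ≤ T, ∀ s a,
      r t s a + ∑' s', ((κ t s a) s').toReal * V π (t + 1) s' ≤ V π t s) :
    ∀ π' : ℕ → S → A, ∀ t ≤ T + 1, ∀ s, V π' t s ≤ V π t s :=
  stmt10_general T r hr κ V hV_end hV_rec π hdev
end

section
/- Let T ∈ ℕ and let ρ be a probability measure on the space Fin (T+1) → ℝ having a density f with respect to Lebesgue measure with f x > 0 for every x. For a threshold sequence κ : Fin (T+1) → ℝ define the first-passage time τ_κ(x) = min{t | x t ≥ κ t} (valued in Fin (T+1) extended by a symbol for 'never'). Then the threshold sequence is identified by its first-passage time: if κ and κ' are threshold sequences with κ ≠ κ', then ρ {x | τ_κ(x) ≠ τ_{κ'}(x)} > 0. -/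
open MeasureTheory

noncomputable def firstPassage {T : ℕ} (κ x : Fin (T + 1) → ℝ) : WithTop (Fin (T + 1)) :=
  (Finset.univ.filter (fun t => κ t ≤ x t)).min

lemma aux_key {T : ℕ} (κ κ' : Fin (T + 1) → ℝ) (t : Fin (T + 1)) (ht : κ t < κ' t) :
    ∃ S : Set (Fin (T + 1) → ℝ), IsOpen S ∧ S.Nonempty ∧
      S ⊆ {x | firstPassage κ x ≠ firstPassage κ' x} := by
  refine ⟨Set.pi Set.univ (fun s => if s = t then Set.Ioo (κ t) (κ' t)
      else Set.Iio (min (κ s) (κ' s))), ?_, ?_, ?_⟩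
  · exact isOpen_set_pi Set.finite_univ (fun s _ => by
      split <;> [exact isOpen_Ioo; exact isOpen_Iio])
  · refine ⟨fun s => if s = t then (κ t + κ' t)/2 else min (κ s) (κ' s) - 1, ?_⟩
    intro s _
    beta_reduce
    by_cases h : s = t
    · rw [if_pos h, if_pos h]
      exact ⟨by linarith, by linarith⟩
    · rw [if_neg h, if_neg h]
      exact sub_one_lt (min (κ s) (κ' s))
  · intro x hx
    have hxt : x t ∈ Set.Ioo (κ t) (κ' t) := by simpa using hx t (Set.mem_univ t)
    have hxs : ∀ s, s ≠ t → x s < min (κ s) (κ' s) := by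
      intro s hs
      have := hx s (Set.mem_univ s)
      simpa [hs] using this
    have h2 : firstPassage κ' x = ⊤ := by
      rw [firstPassage, Finset.min_eq_top]
      rw [Finset.filter_eq_empty_iff]
      intro s _
      by_cases h : s = t
      · subst h; push_neg; exact hxt.2
      · push_neg; exact lt_of_lt_of_le (hxs s h) (min_le_right _ _)
    have h1 : firstPassage κ x ≠ ⊤ := by
      rw [firstPassage, Ne, Finset.min_eq_top]
      intro h
      have : t ∈ Finset.univ.filter (fun s => κ s ≤ x s) := by
        simp [hxt.1.le]
      rw [h] at this
      simp at this
    simp only [Set.mem_setOf_eq, h2]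
    exact h1

lemma aux_pos (T : ℕ) (f : (Fin (T + 1) → ℝ) → ENNReal) (hf_meas : Measurable f)
    (hf_pos : ∀ x, 0 < f x)
    (ρ : Measure (Fin (T + 1) → ℝ)) (hρ : ρ = volume.withDensity f)
    (κ κ' : Fin (T + 1) → ℝ) (t : Fin (T + 1)) (ht : κ t < κ' t) :
    0 < ρ {x | firstPassage κ x ≠ firstPassage κ' x} := by
  obtain ⟨S, hSo, hSne, hSsub⟩ := aux_key κ κ' t ht
  have hvol : 0 < volume S := hSo.measure_pos volume hSne
  have hρS : 0 < ρ S := by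
    rw [hρ, withDensity_apply f hSo.measurableSet]
    rw [MeasureTheory.lintegral_pos_iff_support hf_meas]
    have : Function.support f = Set.univ := by
      ext x; simp [Function.support, (hf_pos x).ne']
    rw [this, Measure.restrict_apply_univ]
    exact hvol
  exact lt_of_lt_of_le hρS (measure_mono hSsub)

/-- Under a probability measure with everywhere-positive density with respect to Lebesgue
measure on path space, distinct threshold sequences induce first-passage times that differ
with positive probability. -/
theorem stmt12 (T : ℕ) (f : (Fin (T + 1) → ℝ) → ENNReal) (hf_meas : Measurable f)
    (hf_pos : ∀ x, 0 < f x)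
    (ρ : Measure (Fin (T + 1) → ℝ)) (hρ : ρ = volume.withDensity f)
    (hprob : IsProbabilityMeasure ρ)
    (κ κ' : Fin (T + 1) → ℝ) (hne : κ ≠ κ') :
    0 < ρ {x | firstPassage κ x ≠ firstPassage κ' x} := by
  obtain ⟨t, ht⟩ := Function.ne_iff.mp hne
  rcases lt_or_gt_of_ne ht with h | h
  · exact aux_pos T f hf_meas hf_pos ρ hρ κ κ' t h
  · have : {x | firstPassage κ x ≠ firstPassage κ' x}
        = {x | firstPassage κ' x ≠ firstPassage κ x} := by
      ext x; simp [ne_comm]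
    rw [this]
    exact aux_pos T f hf_meas hf_pos ρ hρ κ' κ t h
end
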